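/- arXiv:2001.01104 — 4 statements merged into one kernel-verified Lean document; each statement's English description precedes it below -/
import Mathlib

section
/- Let p be a prime, q = p^r with r ≥ 1, g ≥ 1, and let a be an integer with p ∤ a and a² < 4·q^g. Let R ⊂ ℂ be the set of complex roots of f(t) = t^{2g} + a·t^g + q^g. Then for every integer n ≥ 1, the map α ↦ α^n is injective on R if and only if gcd(n, g) = 1. -/
/-!
Write `f(t) = (t^g - x)(t^g - y)` with `x + y = -a` and `x y = q^g`, so that the roots of `f` are
the `g`-th roots of `x` and of `y`. Two `g`-th roots of the same number differ by a `g`-th root of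
unity, which `α ↦ α^n` can identify exactly when `gcd(n, g) > 1`. Roots of `x` and of `y` are never
identified because `x^n ≠ y^n`: otherwise the integer `x^n + y^n`, a value of the Dickson
polynomial `D_n(X, q^g)`, would satisfy `(x^n + y^n)^2 = 4 q^(gn)`, so `p` would divide it, while
`x^n + y^n ≡ (-a)^n (mod p)` and `p ∤ a`.
-/

open Polynomial Set

namespace Polynomial

variable {R S : Type*} [CommRing R] [CommRing S]

theorem map_eval_dickson (f : R →+* S) (k : ℕ) (c x : R) (n : ℕ) :
    f ((dickson k c n).eval x) = (dickson k (f c) n).eval (f x) := by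
  rw [← map_dickson f, eval_map, eval₂_at_apply]

theorem dickson_at_zero_succ (k n : ℕ) : dickson k (0 : R) (n + 1) = X ^ (n + 1) := by
  induction n with
  | zero => simp
  | succ n ih => rw [dickson_add_two, ih, C_0, zero_mul, sub_zero, pow_succ' X (n + 1)]

theorem dickson_one_eval_add (x y : R) :
    ∀ n, (dickson 1 (x * y) n).eval (x + y) = x ^ n + y ^ n
  | 0 => by norm_num
  | 1 => by simp
  | n + 2 => by
    rw [dickson_add_two, eval_sub, eval_mul, eval_mul, eval_X, eval_C,
      dickson_one_eval_add x y (n + 1), dickson_one_eval_add x y n]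
    ring

end Polynomial

theorem exists_add_eq_and_mul_eq {K : Type*} [Field K] [IsAlgClosed K] [NeZero (2 : K)]
    (s c : K) : ∃ x y : K, x + y = s ∧ x * y = c := by
  obtain ⟨t, ht⟩ := IsAlgClosed.exists_eq_mul_self (s ^ 2 - 4 * c)
  refine ⟨(s + t) / 2, (s - t) / 2, by field_simp; ring, ?_⟩
  field_simp
  linear_combination ht

theorem sq_add_mul_add_eq_zero_iff {K : Type*} [CommRing K] [IsDomain K] {b c x y z : K}
    (hsum : x + y = -b) (hprod : x * y = c) : z ^ 2 + b * z + c = 0 ↔ z = x ∨ z = y := by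
  rw [show z ^ 2 + b * z + c = (z - x) * (z - y) by linear_combination z * hsum - hprod,
    mul_eq_zero, sub_eq_zero, sub_eq_zero]

theorem pow_ne_pow_of_dvd_mul_of_not_dvd_add {A : Type*} [CommRing A] [CharZero A]
    {p : ℕ} [Fact p.Prime] {P Q : ℤ} (hQ : (p : ℤ) ∣ Q) (hP : ¬ (p : ℤ) ∣ P) {x y : A}
    (hsum : x + y = P) (hprod : x * y = Q) {n : ℕ} (hn : n ≠ 0) : x ^ n ≠ y ^ n := by
  intro hxy
  set V := (dickson 1 Q n).eval P
  have hVA : (V : A) = x ^ n + y ^ n := by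
    rw [← eq_intCast (Int.castRingHom A), map_eval_dickson, eq_intCast, eq_intCast, ← hsum,
      ← hprod, dickson_one_eval_add]
  have hVsq : V ^ 2 = 4 * Q ^ n := by
    have : (V : A) ^ 2 = 4 * (Q : A) ^ n := by
      rw [hVA, ← hprod, mul_pow, hxy]
      ring
    exact_mod_cast this
  obtain ⟨n, rfl⟩ := Nat.exists_eq_succ_of_ne_zero hn
  have hQp : (Q : ZMod p) = 0 := (ZMod.intCast_zmod_eq_zero_iff_dvd Q p).2 hQ
  have hVp : (V : ZMod p) = (P : ZMod p) ^ (n + 1) := by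
    rw [← eq_intCast (Int.castRingHom (ZMod p)), map_eval_dickson, eq_intCast, eq_intCast, hQp,
      dickson_at_zero_succ, eval_pow, eval_X]
  have hPp : (P : ZMod p) ^ (2 * (n + 1)) = 0 := by
    have := congrArg (Int.cast : ℤ → ZMod p) hVsq
    push_cast at this
    rw [hVp, hQp, zero_pow hn, mul_zero, ← pow_mul'] at this
    exact this
  exact hP ((ZMod.intCast_zmod_eq_zero_iff_dvd P p).1 (pow_eq_zero_iff (by omega) |>.1 hPp))

theorem eq_of_pow_eq_of_pow_eq_of_coprime {G₀ : Type*} [CommGroupWithZero G₀] {n g : ℕ}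
    (hng : n.Coprime g) {α β : G₀} (hβ : β ≠ 0) (hn : α ^ n = β ^ n) (hg : α ^ g = β ^ g) :
    α = β := by
  have h1 : (α / β) ^ n = 1 ∧ (α / β) ^ g = 1 := by
    rw [div_pow, div_pow, hn, hg, div_self (pow_ne_zero _ hβ), div_self (pow_ne_zero _ hβ)]
    exact ⟨rfl, rfl⟩
  exact (div_eq_one_iff_eq hβ).1 ((pow_eq_one_iff_of_coprime hng).1 h1)

theorem Complex.not_injOn_pow_setOf_pow_eq {n g : ℕ} (hg : g ≠ 0) (hd : n.gcd g ≠ 1) {x : ℂ}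
    (hx : x ≠ 0) : ¬ InjOn (· ^ n) {α : ℂ | α ^ g = x} := by
  intro hinj
  have hd0 : n.gcd g ≠ 0 := (Nat.gcd_pos_of_pos_right n (Nat.pos_of_ne_zero hg)).ne'
  obtain ⟨ζ, hζ⟩ : ∃ ζ : ℂ, IsPrimitiveRoot ζ (n.gcd g) := ⟨_, isPrimitiveRoot_exp _ hd0⟩
  obtain ⟨α, hα⟩ := IsAlgClosed.exists_pow_nat_eq x (Nat.pos_of_ne_zero hg)
  have hα0 : α ≠ 0 := by rintro rfl; exact hx (hα ▸ zero_pow hg)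
  have hζg : ζ ^ g = 1 := (hζ.pow_eq_one_iff_dvd g).2 (Nat.gcd_dvd_right n g)
  have hζn : ζ ^ n = 1 := (hζ.pow_eq_one_iff_dvd n).2 (Nat.gcd_dvd_left n g)
  have hζα : ζ * α = α :=
    hinj (by simp [mul_pow, hζg, hα]) hα (by simp only [mul_pow, hζn, one_mul])
  exact hζ.ne_one (by omega) (mul_eq_right₀ hα0 |>.1 hζα)

theorem Complex.injOn_pow_setOf_pow_eq_or_iff {n g : ℕ} (hg : g ≠ 0) {x y : ℂ} (hx : x ≠ 0)
    (hy : y ≠ 0) (hxy : x ^ n ≠ y ^ n) :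
    InjOn (· ^ n) {α : ℂ | α ^ g = x ∨ α ^ g = y} ↔ n.gcd g = 1 := by
  refine ⟨fun hinj => ?_, fun hng α hα β hβ hαβ => ?_⟩
  · by_contra hd
    exact not_injOn_pow_setOf_pow_eq hg hd hx (hinj.mono fun _ => Or.inl)
  · change α ^ n = β ^ n at hαβ
    have hβ0 : β ≠ 0 := by
      rintro rfl
      rw [mem_ofPred_eq, zero_pow hg] at hβ
      exact hβ.elim (fun h => hx h.symm) fun h => hy h.symm
    have hpow : (α ^ g) ^ n = (β ^ g) ^ n := by
      rw [← pow_mul, mul_comm, pow_mul, hαβ, ← pow_mul, mul_comm, pow_mul]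
    have hgg : α ^ g = β ^ g := by
      rcases hα with hα | hα <;> rcases hβ with hβ | hβ <;> rw [hα, hβ] at hpow ⊢
      exacts [absurd hpow hxy, absurd hpow.symm hxy]
    exact eq_of_pow_eq_of_pow_eq_of_coprime hng hβ0 hαβ hgg

theorem stmt_2_general (p r g : ℕ) (hp : p.Prime) (hr : 1 ≤ r) (hg : 1 ≤ g)
    (q : ℕ) (hq : q = p ^ r) (a : ℤ) (ha : ¬ (p : ℤ) ∣ a)
    (R : Set ℂ) (hR : R = {α : ℂ | α ^ (2 * g) + (a : ℂ) * α ^ g + (q : ℂ) ^ g = 0}) :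
    ∀ n : ℕ, 1 ≤ n → (Set.InjOn (fun α : ℂ => α ^ n) R ↔ Nat.gcd n g = 1) := by
  intro n hn
  have := Fact.mk hp
  obtain ⟨x, y, hsum, hprod⟩ := exists_add_eq_and_mul_eq (-(a : ℂ)) ((q : ℂ) ^ g)
  have hRxy : R = {α : ℂ | α ^ g = x ∨ α ^ g = y} := by
    ext α
    rw [hR, mem_ofPred_eq, mem_ofPred_eq, pow_mul', sq_add_mul_add_eq_zero_iff hsum hprod]
  have hpq : (p : ℤ) ∣ ((q ^ g : ℕ) : ℤ) :=
    Int.natCast_dvd_natCast.2 (hq ▸ (dvd_pow_self p (by omega)).trans (dvd_pow_self _ (by omega)))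
  have hxy : x ^ n ≠ y ^ n :=
    pow_ne_pow_of_dvd_mul_of_not_dvd_add hpq (by rwa [dvd_neg]) (by push_cast; exact hsum)
      (by push_cast; exact hprod) (by omega)
  obtain ⟨hx, hy⟩ : x ≠ 0 ∧ y ≠ 0 := mul_ne_zero_iff.1 <| hprod ▸
    pow_ne_zero _ (Nat.cast_ne_zero.2 (hq ▸ (pow_pos hp.pos r).ne'))
  rw [hRxy]
  exact Complex.injOn_pow_setOf_pow_eq_or_iff (by omega) hx hy hxy

/-- For an ordinary Weil-central polynomial `f(t) = t^(2g) + a t^g + q^g` (with `p ∤ a`,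
`a² < 4 q^g`, `q = p^r`), the map `α ↦ α^n` is injective on the set of complex roots of `f`
if and only if `gcd(n, g) = 1`. -/
theorem stmt_2 (p r g : ℕ) (hp : p.Prime) (hr : 1 ≤ r) (hg : 1 ≤ g)
    (q : ℕ) (hq : q = p ^ r) (a : ℤ) (ha : ¬ (p : ℤ) ∣ a)
    (ha2 : a ^ 2 < 4 * (q : ℤ) ^ g)
    (R : Set ℂ) (hR : R = {α : ℂ | α ^ (2 * g) + (a : ℂ) * α ^ g + (q : ℂ) ^ g = 0}) :
    ∀ n : ℕ, 1 ≤ n → (Set.InjOn (fun α : ℂ => α ^ n) R ↔ Nat.gcd n g = 1) :=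
  stmt_2_general p r g hp hr hg q hq a ha R hR
end

section
/- Let p be a prime, q = p^r with r ≥ 1, g ≥ 1, and let a be an integer with p ∤ a and a² < 4·q^g. If α ∈ ℂ is a root of x² + a·x + q^g, then for every integer n ≥ 1, α^n is not a real number. -/
/-!
The roots of `x² + a x + q^g` are `α` and `ᾱ`, with `α + ᾱ = -a` and `α ᾱ = q^g`. If some
`α^n` were real, `ζ = α / ᾱ` would be a root of unity, so `ζ + ζ⁻¹ = (a² - 2 q^g) / q^g` would be
an algebraic integer, hence a rational integer. Then `q^g ∣ a²`, which contradicts `p ∤ a`.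
-/

open ComplexConjugate

lemma Int.dvd_of_isIntegral_div {K : Type*} [Field K] [CharZero K] {m k : ℤ} (hk : k ≠ 0)
    (h : IsIntegral ℤ ((m : K) / k)) : k ∣ m := by
  have hq : IsIntegral ℤ ((m : ℚ) / k) := by
    rw [← isIntegral_algebraMap_iff (algebraMap ℚ K).injective]
    simpa using h
  obtain ⟨z, hz⟩ := IsIntegrallyClosed.isIntegral_iff.mp hq
  refine ⟨z, ?_⟩
  rw [algebraMap_int_eq, eq_intCast, eq_div_iff (by exact_mod_cast hk)] at hz
  exact_mod_cast (hz.symm.trans (mul_comm _ _) :)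

lemma isIntegral_add_inv_of_pow_eq_one {K : Type*} [Field K] {ζ : K} {n : ℕ} (hn : n ≠ 0)
    (hζ : ζ ^ n = 1) : IsIntegral ℤ (ζ + ζ⁻¹) := by
  have hζinv : ζ⁻¹ ^ n = 1 := by rw [inv_pow, hζ, inv_one]
  exact (IsIntegral.of_pow (Nat.pos_of_ne_zero hn) (hζ ▸ isIntegral_one)).add
    (IsIntegral.of_pow (Nat.pos_of_ne_zero hn) (hζinv ▸ isIntegral_one))

namespace Complex

section RealCoefficients

variable {b c : ℝ} {α : ℂ}

lemma im_ne_zero_of_root_of_sq_lt (hd : b ^ 2 < 4 * c) (hα : α ^ 2 + b * α + c = 0) :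
    α.im ≠ 0 := by
  intro him
  have hre : α.re ^ 2 + b * α.re + c = 0 := by
    simpa [sq, him] using congrArg re hα
  nlinarith [sq_nonneg (2 * α.re + b)]

lemma add_conj_eq_neg_of_root (him : α.im ≠ 0) (hα : α ^ 2 + b * α + c = 0) :
    α + conj α = -b := by
  have h : (2 * α.re + b) * α.im = 0 := by
    have h := congrArg im hα
    simp only [sq, add_im, mul_im, ofReal_re, ofReal_im, zero_mul, add_zero, zero_im] at h
    linear_combination h
  have hre : 2 * α.re + b = 0 := (mul_eq_zero.mp h).resolve_right him
  apply Complex.ext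
  · simp only [add_re, conj_re, neg_re, ofReal_re]
    linarith
  · simp

lemma mul_conj_eq_of_root (him : α.im ≠ 0) (hα : α ^ 2 + b * α + c = 0) :
    α * conj α = c := by
  linear_combination α * add_conj_eq_neg_of_root him hα - hα

end RealCoefficients

lemma isIntegral_div_conj_add_conj_div {α : ℂ} (hα : α ≠ 0) {n : ℕ} (hn : n ≠ 0)
    (h : (α ^ n).im = 0) : IsIntegral ℤ (α / conj α + conj α / α) := by
  have hζ : (α / conj α) ^ n = 1 := by
    rw [div_pow, ← map_pow, conj_eq_iff_im.mpr h, div_self (pow_ne_zero n hα)]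
  simpa only [inv_div] using isIntegral_add_inv_of_pow_eq_one hn hζ

lemma dvd_sq_of_root_of_im_pow_eq_zero {b c : ℤ} (hd : b ^ 2 < 4 * c) {α : ℂ}
    (hα : α ^ 2 + b * α + c = 0) {n : ℕ} (hn : n ≠ 0) (h : (α ^ n).im = 0) : c ∣ b ^ 2 := by
  have hαR : α ^ 2 + ((b : ℝ) : ℂ) * α + ((c : ℝ) : ℂ) = 0 := by simpa using hα
  have him := im_ne_zero_of_root_of_sq_lt (by exact_mod_cast hd) hαR
  have hsum := add_conj_eq_neg_of_root him hαR
  have hprod := mul_conj_eq_of_root him hαR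
  have hα0 : α ≠ 0 := by rintro rfl; exact him rfl
  have hc : c ≠ 0 := (by nlinarith [sq_nonneg b] : 0 < c).ne'
  have hval : α / conj α + conj α / α = ((b ^ 2 - 2 * c : ℤ) : ℂ) / (c : ℂ) := by
    simp only [ofReal_intCast] at hsum hprod
    have : conj α ≠ 0 := (map_ne_zero _).mpr hα0
    field_simp
    push_cast
    linear_combination (c * (α + conj α - b)) * hsum - (b : ℂ) ^ 2 * hprod
  have hdvd := Int.dvd_of_isIntegral_div hc (hval ▸ isIntegral_div_conj_add_conj_div hα0 hn h)
  exact (dvd_sub_left (dvd_mul_left c 2)).mp hdvd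

end Complex

/-- If `α` is a root of `x² + a x + q^g` with `p ∤ a` and `a² < 4 q^g` (`q = p^r`, `p` prime),
then no positive power `α^n` is real. -/
theorem stmt_4 (p r g : ℕ) (hp : p.Prime) (hr : 1 ≤ r) (hg : 1 ≤ g)
    (q : ℕ) (hq : q = p ^ r) (a : ℤ) (ha : ¬ (p : ℤ) ∣ a)
    (ha2 : a ^ 2 < 4 * (q : ℤ) ^ g)
    (α : ℂ) (hα : α ^ 2 + (a : ℂ) * α + (q : ℂ) ^ g = 0) :
    ∀ n : ℕ, 1 ≤ n → (α ^ n).im ≠ 0 := by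
  intro n hn h
  have hqg : (q : ℤ) ^ g ∣ a ^ 2 :=
    Complex.dvd_sq_of_root_of_im_pow_eq_zero ha2 (by exact_mod_cast hα) (by omega) h
  have hpq : (p : ℤ) ∣ (q : ℤ) ^ g := by
    subst hq
    push_cast
    exact dvd_pow (dvd_pow_self _ (by omega)) (by omega)
  exact ha ((Nat.prime_iff_prime_int.mp hp).dvd_of_dvd_pow (hpq.trans hqg))
end

section
/- For every positive integer m let P_m(x) = Σ_{j=0}^{m-1} x^j ∈ ℤ[x]. Then for every odd integer n ≥ 1 the following polynomial identity holds in ℤ[x]: P_n(x) = (x + 1)^{n-1} - Σ_{i=1}^{(n-1)/2} [binom(n,i) - 2·binom(n-1,i-1)] · x^i · P_{n-2i}(x), with P_1(x) = 1. -/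
/-!
Multiplying by `x - 1` turns the identity into
`x ^ (2h+1) - 1 = (x - 1)(x + 1)^(2h) - ∑ cᵢ xⁱ (x^(2h+1-2i) - 1)`.
The polynomial `(x - 1)(x + 1)^(2h)` is anti-palindromic of degree `2h + 1`: its coefficient
`q_j = C(2h+1, j) - 2 C(2h, j)` satisfies `q_{2h+1-j} = -q_j`. Pairing the monomials `j` and
`2h + 1 - j` writes it as `x^(2h+1) - 1 + ∑_{i=1}^{h} q_{2h+1-i} xⁱ (x^(2h+1-2i) - 1)`, and
`q_{2h+1-i}` is exactly the coefficient `cᵢ = C(2h+1, i) - 2 C(2h, i-1)`.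
-/

open Polynomial Finset

theorem Finset.sum_range_two_mul_eq_sum_add_reflect {M : Type*} [AddCommMonoid M]
    (f : ℕ → M) (k : ℕ) :
    ∑ j ∈ range (2 * k), f j = ∑ j ∈ range k, (f j + f (2 * k - 1 - j)) := by
  rw [two_mul, sum_range_add, ← sum_range_reflect (fun j => f (k + j)), ← sum_add_distrib]
  refine sum_congr rfl fun j hj => ?_
  rw [mem_range] at hj
  rw [show k + (k - 1 - j) = k + k - 1 - j by omega]

theorem Finset.sum_Icc_one_eq_sum_range_succ {M : Type*} [AddCommMonoid M] (f : ℕ → M) (n : ℕ) :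
    ∑ i ∈ Icc 1 n, f i = ∑ i ∈ range n, f (i + 1) := by
  rw [← Ico_add_one_right_eq_Icc, sum_Ico_eq_sum_range, Nat.add_sub_cancel]
  simp only [add_comm]

theorem Nat.choose_succ_sub_two_mul_choose_succ (m j : ℕ) :
    ((m + 1).choose (j + 1) : ℤ) - 2 * m.choose (j + 1)
      = -(((m + 1).choose (j + 1) : ℤ) - 2 * m.choose j) := by
  rw [Nat.choose_succ_succ']
  push_cast
  ring

theorem Nat.choose_succ_sub_two_mul_choose_reflect {m j : ℕ} (hj : j ≤ m) :
    ((m + 1).choose (m - j) : ℤ) - 2 * m.choose (m - j)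
      = ((m + 1).choose (j + 1) : ℤ) - 2 * m.choose j := by
  rw [Nat.choose_symm hj, show m - j = m + 1 - (j + 1) by omega, Nat.choose_symm (by omega)]

section CommRing

variable {R : Type*} [CommRing R]

theorem sub_one_mul_add_one_pow (x : R) (m : ℕ) :
    (x - 1) * (x + 1) ^ m
      = ∑ j ∈ range (m + 2), ((((m + 1).choose j : ℤ) - 2 * m.choose j : ℤ) : R) * x ^ j := by
  have hpow : ∀ k, (x + 1) ^ k = ∑ j ∈ range (k + 1), (k.choose j : R) * x ^ j := fun k => by
    rw [add_pow]
    exact sum_congr rfl fun j _ => by rw [one_pow, mul_one, mul_comm]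
  have hpow' : (x + 1) ^ m = ∑ j ∈ range (m + 2), (m.choose j : R) * x ^ j := by
    rw [sum_range_succ, Nat.choose_succ_self, hpow]
    simp
  calc (x - 1) * (x + 1) ^ m = (x + 1) ^ (m + 1) - 2 * (x + 1) ^ m := by ring
    _ = _ := by
      rw [hpow, hpow', mul_sum, ← sum_sub_distrib]
      refine sum_congr rfl fun j _ => ?_
      push_cast
      ring

theorem pow_two_mul_add_one_sub_one (x : R) (h : ℕ) :
    x ^ (2 * h + 1) - 1 = (x - 1) * (x + 1) ^ (2 * h) -
      ∑ i ∈ Icc 1 h,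
        ((((2 * h + 1).choose i : ℤ) - 2 * (2 * h).choose (i - 1) : ℤ) : R)
          * x ^ i * (x ^ (2 * h + 1 - 2 * i) - 1) := by
  rw [sub_one_mul_add_one_pow, show 2 * h + 2 = 2 * (h + 1) by ring,
    sum_range_two_mul_eq_sum_add_reflect, sum_range_succ', sum_Icc_one_eq_sum_range_succ,
    eq_sub_iff_add_eq]
  have hfirst : ((((2 * h + 1).choose 0 : ℤ) - 2 * (2 * h).choose 0 : ℤ) : R) * x ^ 0
      + ((((2 * h + 1).choose (2 * (h + 1) - 1 - 0) : ℤ)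
          - 2 * (2 * h).choose (2 * (h + 1) - 1 - 0) : ℤ) : R) * x ^ (2 * (h + 1) - 1 - 0)
      = x ^ (2 * h + 1) - 1 := by
    rw [show 2 * (h + 1) - 1 - 0 = 2 * h + 1 by omega, Nat.choose_self,
      Nat.choose_eq_zero_of_lt (by omega : 2 * h < 2 * h + 1), Nat.choose_zero_right,
      Nat.choose_zero_right]
    push_cast
    ring
  rw [hfirst, add_comm _ (x ^ (2 * h + 1) - 1)]
  congr 1
  refine sum_congr rfl fun i hi => ?_
  rw [mem_range] at hi
  rw [show 2 * (h + 1) - 1 - (i + 1) = 2 * h - i by omega,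
    Nat.choose_succ_sub_two_mul_choose_succ, Nat.choose_succ_sub_two_mul_choose_reflect (by omega),
    Nat.add_sub_cancel, mul_assoc, mul_sub, ← pow_add,
    show i + 1 + (2 * h + 1 - 2 * (i + 1)) = 2 * h - i by omega]
  push_cast
  ring

end CommRing

open Polynomial in
/-- Recursion for `P_n(x) = 1 + x + ⋯ + x^(n-1)` for odd `n`. -/
theorem stmt_5 (P : ℕ → Polynomial ℤ)
    (hP : ∀ m : ℕ, 1 ≤ m → P m = ∑ j ∈ Finset.range m, X ^ j) :
    ∀ n : ℕ, 1 ≤ n → Odd n →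
      P n = (X + 1) ^ (n - 1) -
        ∑ i ∈ Finset.Icc 1 ((n - 1) / 2),
          C ((n.choose i : ℤ) - 2 * ((n - 1).choose (i - 1) : ℤ)) * X ^ i * P (n - 2 * i) := by
  rintro n hn ⟨h, rfl⟩
  rw [Nat.add_sub_cancel, show 2 * h / 2 = h by omega]
  apply mul_left_cancel₀ (X_sub_C_ne_zero (1 : ℤ))
  rw [map_one, hP _ hn, mul_geom_sum, pow_two_mul_add_one_sub_one, mul_sub, mul_sum]
  congr 1
  refine sum_congr rfl fun i hi => ?_
  rw [mem_Icc] at hi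
  rw [hP _ (by omega), eq_intCast C, ← mul_geom_sum]
  ring
end

section
/- Let g ≥ 1, let a, q be integers with q ≥ 2, and let ℓ be a prime with ℓ ∤ g and ℓ ∤ (q^g - 1) and ℓ ∤ q. Define a_0 = -1, a_1 = a, and for n ≥ 2, a_n = (-1)^n a^n - Σ_{i=1}^{⌊n/2⌋} binom(n,i) a_{n-2i} q^{g·i}; set N_n = q^{g·n} + a_n + 1. Let ω be the multiplicative order of q^g modulo ℓ. Then for every integer n ≥ 1 with gcd(n, g) = 1 and ω ∤ n, it is not the case that both ℓ² ∣ N_n and ℓ ∣ g(a_n + 2). -/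
theorem orderOf_intCast_dvd_of_dvd_pow_sub_one {ℓ n : ℕ} {x : ℤ}
    (h : (ℓ : ℤ) ∣ x ^ n - 1) : orderOf (x : ZMod ℓ) ∣ n := by
  apply orderOf_dvd_of_pow_eq_one
  rw [← sub_eq_zero]
  exact_mod_cast (ZMod.intCast_zmod_eq_zero_iff_dvd _ ℓ).mpr h

theorem stmt_9_general (g : ℕ) (q : ℤ)
    (ℓ : ℕ) (hℓ : ℓ.Prime)
    (hlg : ¬ (ℓ : ℤ) ∣ (g : ℤ))
    (A : ℕ → ℤ)
    (N : ℕ → ℤ) (hN : ∀ n : ℕ, N n = q ^ (g * n) + A n + 1)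
    (ω : ℕ) (hω : ω = orderOf ((q : ZMod ℓ) ^ g)) :
    ∀ n : ℕ, 1 ≤ n → Nat.gcd n g = 1 → ¬ ω ∣ n →
      ¬ ((ℓ : ℤ) ^ 2 ∣ N n ∧ (ℓ : ℤ) ∣ (g : ℤ) * (A n + 2)) := by
  intro n _ _ hωn ⟨hN_sq, hgA⟩
  have hA : (ℓ : ℤ) ∣ A n + 2 :=
    ((Nat.prime_iff_prime_int.mp hℓ).dvd_mul.mp hgA).resolve_left hlg
  have hN_dvd : (ℓ : ℤ) ∣ N n := (dvd_pow_self _ two_ne_zero).trans hN_sq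
  have hpow : (ℓ : ℤ) ∣ (q ^ g) ^ n - 1 := by
    have h : (q ^ g) ^ n - 1 = N n - (A n + 2) := by rw [hN, ← pow_mul]; ring
    exact h ▸ dvd_sub hN_dvd hA
  apply hωn
  simpa [hω] using orderOf_intCast_dvd_of_dvd_pow_sub_one hpow

/-- If `ℓ ∤ g`, `ℓ ∤ q^g - 1` and `ℓ ∤ q`, then for every `n` coprime to `g` with
`ω = ord_ℓ(q^g) ∤ n`, the extension `𝒜_n` satisfies the `ℓ`-cyclicity criterion:
not both `ℓ² ∣ N_n` and `ℓ ∣ g(a_n + 2)`. -/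
theorem stmt_9 (g : ℕ) (hg : 1 ≤ g) (a q : ℤ) (hq : 2 ≤ q)
    (ℓ : ℕ) (hℓ : ℓ.Prime)
    (hlg : ¬ (ℓ : ℤ) ∣ (g : ℤ)) (hlq1 : ¬ (ℓ : ℤ) ∣ (q ^ g - 1)) (hlq : ¬ (ℓ : ℤ) ∣ q)
    (A : ℕ → ℤ) (hA0 : A 0 = -1) (hA1 : A 1 = a)
    (hA : ∀ n : ℕ, 2 ≤ n → A n = (-1) ^ n * a ^ n -
      ∑ i ∈ Finset.Icc 1 (n / 2), (n.choose i : ℤ) * A (n - 2 * i) * q ^ (g * i))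
    (N : ℕ → ℤ) (hN : ∀ n : ℕ, N n = q ^ (g * n) + A n + 1)
    (ω : ℕ) (hω : ω = orderOf ((q : ZMod ℓ) ^ g)) :
    ∀ n : ℕ, 1 ≤ n → Nat.gcd n g = 1 → ¬ ω ∣ n →
      ¬ ((ℓ : ℤ) ^ 2 ∣ N n ∧ (ℓ : ℤ) ∣ (g : ℤ) * (A n + 2)) :=
  stmt_9_general g q ℓ hℓ hlg A N hN ω hω
end
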